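/- arXiv:2406.15606 — 3 statements merged into one kernel-verified Lean document; each statement's English description precedes it below -/
import Mathlib

section
/- Let K be a Galois number field of degree n over ℚ, let E be an elliptic curve over ℚ, and let q be an odd prime power. Suppose E(K)[q] ≅ ℤ/qℤ and gcd(n, φ(q)) = 1, where φ is Euler's totient function. Then E(K)[q] = E(ℚ)[q], i.e., every point of E(K) of order dividing q is defined over ℚ. -/
/-!
The Galois group `Gal(K/ℚ)` acts on `E(K)[q] ≅ ℤ/qℤ` by group automorphisms, and
`Aut(ℤ/qℤ) ≅ (ℤ/qℤ)ˣ` has order `φ(q)`. Since `|Gal(K/ℚ)| = n` is coprime to `φ(q)`, the action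
is trivial, so the coordinates of every point of `E(K)[q]` are Galois-invariant, hence rational.
-/

open WeierstrassCurve WeierstrassCurve.Affine

theorem MonoidHom.eq_one_of_coprime_natCard {G H : Type*} [Group G] [Group H] (f : G →* H)
    (h : (Nat.card G).Coprime (Nat.card H)) : f = 1 :=
  range_eq_bot_iff.mp <| Subgroup.card_eq_one.mp <|
    Nat.eq_one_of_dvd_coprimes h (Subgroup.card_range_dvd f) f.range.card_subgroup_dvd_card

theorem ZMod.natCard_addAut (q : ℕ) [NeZero q] : Nat.card (AddAut (ZMod q)) = q.totient := by
  rw [Nat.card_congr (ZMod.AddAutEquivUnits q).toEquiv, Nat.card_congr Additive.toMul,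
    Nat.card_eq_fintype_card, ZMod.card_units_eq_totient]

theorem DistribMulAction.smul_eq_self_of_coprime_totient {G A : Type*} [Group G] [AddGroup A]
    [DistribMulAction G A] {q : ℕ} [NeZero q] (e : A ≃+ ZMod q)
    (h : (Nat.card G).Coprime q.totient) (g : G) (a : A) : g • a = a := by
  have hcard : Nat.card (Multiplicative (AddAut A)) = q.totient := by
    rw [Nat.card_congr Multiplicative.toAdd, Nat.card_congr (AddAut.congr e).toEquiv,
      ZMod.natCard_addAut]
  have htriv := (toAddAut G A).eq_one_of_coprime_natCard (hcard ▸ h)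
  exact DFunLike.congr_fun (congrArg Multiplicative.toAdd (DFunLike.congr_fun htriv g)) a

namespace Submodule

variable {G M : Type*} [Monoid G] [AddCommGroup M] [DistribMulAction G M]

instance (n : ℤ) : SMul G (torsionBy ℤ M n) where
  smul g x := ⟨g • x.1, by
    rw [mem_torsionBy_iff, smul_comm, (mem_torsionBy_iff _ _).mp x.2, smul_zero]⟩

instance (n : ℤ) : DistribMulAction G (torsionBy ℤ M n) :=
  Subtype.val_injective.distribMulAction (torsionBy ℤ M n).subtype.toAddMonoidHom fun _ _ ↦ rfl

theorem map_torsionBy_of_injective {R N : Type*} [CommRing R] [Module R M] [AddCommGroup N]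
    [Module R N] (f : M →ₗ[R] N) (hf : Function.Injective f) (a : R) :
    (torsionBy R M a).map f = torsionBy R N a ⊓ LinearMap.range f := by
  ext y
  simp only [mem_map, mem_inf, mem_torsionBy_iff, LinearMap.mem_range]
  constructor
  · rintro ⟨x, hx, rfl⟩
    exact ⟨by rw [← map_smul, hx, map_zero], x, rfl⟩
  · rintro ⟨hy, x, rfl⟩
    exact ⟨x, hf (by rw [map_smul, hy, map_zero]), rfl⟩

end Submodule

namespace WeierstrassCurve.Affine.Point

variable {R F K : Type*} [CommRing R] [Field F] [Field K] [Algebra R F] [Algebra R K]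
  [Algebra F K] [IsScalarTower R F K] [DecidableEq K] {W : WeierstrassCurve R}

noncomputable instance : DistribMulAction Gal(K/F) (W⁄K).Point where
  smul σ := map (σ : K →ₐ[F] K)
  one_smul P := by cases P <;> rfl
  mul_smul _ _ P := by cases P <;> rfl
  smul_zero _ := map_zero _
  smul_add _ := map_add _

theorem mem_range_baseChange_iff_forall_smul_eq [DecidableEq F] [IsGalois F K]
    (P : (W⁄K).Point) :
    P ∈ Set.range (baseChange F K) ↔ ∀ σ : Gal(K/F), σ • P = P := by
  constructor
  · rintro ⟨Q, rfl⟩ σ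
    exact map_baseChange _ Q
  · intro h
    cases P with
    | zero => exact ⟨0, rfl⟩
    | @some x y hxy =>
      have hfix : ∀ σ : Gal(K/F), σ x = x ∧ σ y = y := fun σ ↦ some.inj (h σ)
      obtain ⟨x₀, rfl⟩ := (InfiniteGalois.mem_range_algebraMap_iff_fixed x).mpr
        fun σ ↦ (hfix σ).1
      obtain ⟨y₀, rfl⟩ := (InfiniteGalois.mem_range_algebraMap_iff_fixed y).mpr
        fun σ ↦ (hfix σ).2
      exact ⟨some _ _
        ((Affine.baseChange_nonsingular (W := W) (Algebra.ofId F K).injective x₀ y₀).mp hxy), rfl⟩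

end WeierstrassCurve.Affine.Point

open Classical in
theorem statement0_general (E : WeierstrassCurve ℚ)
    (K : Type) [Field K] [NumberField K] [IsGalois ℚ K]
    (n : ℕ) (hn : Module.finrank ℚ K = n)
    (q : ℕ) (hq : IsPrimePow q)
    (hcyc : Nonempty ((Submodule.torsionBy ℤ (Affine.Point (E.baseChange K)) (q : ℤ)) ≃+ ZMod q))
    (hgcd : Nat.gcd n (Nat.totient q) = 1) :
    Submodule.torsionBy ℤ (Affine.Point (E.baseChange K)) (q : ℤ) =
      Submodule.map (Affine.Point.map (W' := E) (Algebra.ofId ℚ K)).toIntLinearMap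
        (Submodule.torsionBy ℤ (Affine.Point (E.baseChange ℚ)) (q : ℤ)) := by
  obtain ⟨e⟩ := hcyc
  have : NeZero q := ⟨hq.ne_zero⟩
  have hcard : Nat.card Gal(K/ℚ) = n := by rw [IsGalois.card_aut_eq_finrank, hn]
  rw [Submodule.map_torsionBy_of_injective _ (Point.map_injective _), eq_comm, inf_eq_left]
  intro P hP
  have hfix (σ : Gal(K/ℚ)) : σ • P = P := congrArg Subtype.val <|
    DistribMulAction.smul_eq_self_of_coprime_totient e (hcard ▸ hgcd) σ ⟨P, hP⟩
  obtain ⟨Q, rfl⟩ := (Point.mem_range_baseChange_iff_forall_smul_eq P).mpr hfix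
  exact ⟨Q, rfl⟩

open Classical in
/-- Let `K` be a Galois number field of degree `n` over `ℚ`, `E` an elliptic
curve over `ℚ`, and `q` an odd prime power. If `E(K)[q] ≅ ℤ/qℤ` and `gcd(n, φ(q)) = 1`,
then `E(K)[q] = E(ℚ)[q]`. -/
theorem statement0 (E : WeierstrassCurve ℚ) [E.IsElliptic]
    (K : Type) [Field K] [NumberField K] [IsGalois ℚ K]
    (n : ℕ) (hn : Module.finrank ℚ K = n)
    (q : ℕ) (hq : IsPrimePow q) (hodd : Odd q)
    (hcyc : Nonempty ((Submodule.torsionBy ℤ (Affine.Point (E.baseChange K)) (q : ℤ)) ≃+ ZMod q))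
    (hgcd : Nat.gcd n (Nat.totient q) = 1) :
    Submodule.torsionBy ℤ (Affine.Point (E.baseChange K)) (q : ℤ) =
      Submodule.map (Affine.Point.map (W' := E) (Algebra.ofId ℚ K)).toIntLinearMap
        (Submodule.torsionBy ℤ (Affine.Point (E.baseChange ℚ)) (q : ℤ)) :=
  statement0_general E K n hn q hq hcyc hgcd
end

section
/- Let E be an elliptic curve over ℚ and let K be a Galois number field. If E(K)_tors ≅ ℤ/mℤ × ℤ/(mn)ℤ, then E admits a cyclic n-isogeny defined over ℚ; that is, there exists a Gal(ℚ̄/ℚ)-stable cyclic subgroup of E(ℚ̄) of order n. -/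
open WeierstrassCurve WeierstrassCurve.Affine

open scoped Classical

/-!
Let `t ∈ E(K)_tors` correspond to `(0, 1)`, a point of order `mn`. Multiplication by `m` kills the
first factor `ℤ/mℤ`, so `m • E(K)_tors` is the cyclic group of order `n` generated by `m • t`.
Every `σ ∈ Gal(ℚ̄/ℚ)` restricts to an automorphism of the normal extension `K`, which maps torsion
points to torsion points and commutes with multiplication by `m`; hence `σ` preserves `⟨m • t⟩`.
-/

lemma ZMod.nsmul_mem_zmultiples_nsmul_zero_one (m k : ℕ) (x : ZMod m × ZMod k) :
    m • x ∈ AddSubgroup.zmultiples (m • ((0, 1) : ZMod m × ZMod k)) := by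
  refine ⟨(x.2.cast : ℤ), ?_⟩
  ext <;> simp [mul_comm]

lemma AddSubgroup.nsmul_mem_zmultiples_of_addEquiv_prod {G : Type*} [AddCommGroup G]
    {T : AddSubgroup G} {m k : ℕ} (e : T ≃+ ZMod m × ZMod k) {g : G} (hg : g ∈ T) :
    m • g ∈ zmultiples (m • (e.symm (0, 1) : G)) := by
  have h := AddSubgroup.mem_map_of_mem (T.subtype.comp e.symm.toAddMonoidHom)
    (ZMod.nsmul_mem_zmultiples_nsmul_zero_one m k (e ⟨g, hg⟩))
  rw [AddMonoidHom.map_zmultiples, map_nsmul, map_nsmul] at h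
  simpa only [AddMonoidHom.comp_apply, AddEquiv.coe_toAddMonoidHom, AddEquiv.symm_apply_apply,
    AddSubgroup.subtype_apply] using h

lemma AddSubgroup.addOrderOf_coe_symm_zero_one {G : Type*} [AddCommGroup G]
    {T : AddSubgroup G} {m k : ℕ} (e : T ≃+ ZMod m × ZMod k) :
    addOrderOf (e.symm (0, 1) : G) = k := by
  rw [AddSubgroup.addOrderOf_coe, AddEquiv.addOrderOf_eq, Prod.addOrderOf_mk, addOrderOf_zero,
    ZMod.addOrderOf_one, Nat.lcm_one_left]

lemma AlgHom.exists_comp_eq_comp_of_normal {F K L : Type*} [Field F] [Field K] [Field L]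
    [Algebra F K] [Algebra F L] [Normal F K] (φ : K →ₐ[F] L) (σ : L →ₐ[F] L) :
    ∃ τ : K →ₐ[F] K, σ.comp φ = φ.comp τ := by
  let := φ.toRingHom.toAlgebra
  have : IsScalarTower F K L := .of_algebraMap_eq fun x => (φ.commutes x).symm
  exact ⟨σ.restrictNormal K, AlgHom.ext fun x => (σ.restrictNormal_commutes K x).symm⟩

namespace WeierstrassCurve.Affine.Point

variable {F K L : Type*} [Field F] [Field K] [Field L] [Algebra F K] [Algebra F L]
  {W : WeierstrassCurve F}

lemma map_map_symm (σ : L ≃ₐ[F] L) (P : (W⁄L).Point) :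
    map (W' := W) σ.toAlgHom (map σ.symm.toAlgHom P) = P := by
  rw [map_map, show σ.toAlgHom.comp σ.symm.toAlgHom = AlgHom.id F L by ext; simp]
  cases P <;> rfl

lemma map_mem_zmultiples_map_of_normal [Normal F K] (φ : K →ₐ[F] L) {P : (W⁄K).Point}
    (hP : ∀ τ : K →ₐ[F] K, map τ P ∈ AddSubgroup.zmultiples P) (σ : L →ₐ[F] L) :
    map σ (map φ P) ∈ AddSubgroup.zmultiples (map φ P) := by
  obtain ⟨τ, hτ⟩ := φ.exists_comp_eq_comp_of_normal σ
  rw [map_map, hτ, ← map_map, ← AddMonoidHom.map_zmultiples]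
  exact AddSubgroup.mem_map_of_mem _ (hP τ)

lemma map_zmultiples_eq_of_forall_map_mem {P : (W⁄L).Point}
    (hP : ∀ σ : L →ₐ[F] L, map σ P ∈ AddSubgroup.zmultiples P) (σ : L ≃ₐ[F] L) :
    (AddSubgroup.zmultiples P).map (map σ.toAlgHom) = AddSubgroup.zmultiples P := by
  rw [AddMonoidHom.map_zmultiples]
  refine le_antisymm (AddSubgroup.zmultiples_le_of_mem (hP _))
    (AddSubgroup.zmultiples_le_of_mem ?_)
  have h := AddSubgroup.mem_map_of_mem (map σ.toAlgHom) (hP σ.symm.toAlgHom)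
  rwa [map_map_symm, AddMonoidHom.map_zmultiples] at h

end WeierstrassCurve.Affine.Point

theorem statement10_general (E : WeierstrassCurve ℚ)
    (K : Type) [Field K] [NumberField K] [IsGalois ℚ K] (m n : ℕ)
    (h : Nonempty ((AddCommGroup.torsion (E⁄K).Point) ≃+ (ZMod m × ZMod (m * n)))) :
    ∃ P : (E⁄(AlgebraicClosure ℚ)).Point, addOrderOf P = n ∧
      ∀ σ : AlgebraicClosure ℚ ≃ₐ[ℚ] AlgebraicClosure ℚ,
        AddSubgroup.map (Affine.Point.map (W' := E) σ.toAlgHom) (AddSubgroup.zmultiples P) =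
          AddSubgroup.zmultiples P := by
  obtain ⟨e⟩ := h
  set t : (E⁄K).Point := ↑(e.symm (0, 1))
  have ht : addOrderOf t = m * n := AddSubgroup.addOrderOf_coe_symm_zero_one e
  have hm : m ≠ 0 := left_ne_zero_of_mul <| ht ▸ (e.symm (0, 1)).2.addOrderOf_pos.ne'
  let φ : K →ₐ[ℚ] AlgebraicClosure ℚ := IsAlgClosed.lift
  refine ⟨Point.map φ (m • t), ?_, Point.map_zmultiples_eq_of_forall_map_mem <|
    Point.map_mem_zmultiples_map_of_normal φ fun τ => ?_⟩
  · rw [addOrderOf_injective _ (Point.map_injective φ),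
      addOrderOf_nsmul_of_dvd hm (ht ▸ dvd_mul_right m n), ht, Nat.mul_div_cancel_left _ hm.bot_lt]
  · rw [map_nsmul]
    exact AddSubgroup.nsmul_mem_zmultiples_of_addEquiv_prod e <|
      (AddCommGroup.mem_torsion _).2 ((Point.map τ).isOfFinAddOrder (e.symm (0, 1)).2)

/-- Chou: if `E(K)_tors ≅ ℤ/mℤ × ℤ/mnℤ` for a Galois number field `K`,
then `E` admits a rational cyclic `n`-isogeny, i.e. a Galois-stable cyclic subgroup of
order `n` in `E(ℚ̄)`. -/
theorem statement10 (E : WeierstrassCurve ℚ) [E.IsElliptic]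
    (K : Type) [Field K] [NumberField K] [IsGalois ℚ K] (m n : ℕ)
    (h : Nonempty ((AddCommGroup.torsion (E⁄K).Point) ≃+ (ZMod m × ZMod (m * n)))) :
    ∃ P : (E⁄(AlgebraicClosure ℚ)).Point, addOrderOf P = n ∧
      ∀ σ : AlgebraicClosure ℚ ≃ₐ[ℚ] AlgebraicClosure ℚ,
        AddSubgroup.map (Affine.Point.map (W' := E) σ.toAlgHom) (AddSubgroup.zmultiples P) =
          AddSubgroup.zmultiples P :=
  statement10_general E K m n h
end

section
/- Let p > 3 be a prime with p ≡ 3 (mod 4), let E/ℚ be an elliptic curve with E(ℚ(ζ_p))_tors ≅ ℤ/16ℤ, and assume p − 1 is not divisible by 3, 4, or 5. Then E(ℚ(ζ_p))_tors = E(ℚ(√(−p)))_tors, i.e., all torsion points of E over ℚ(ζ_p) are already defined over the unique quadratic subfield ℚ(√(−p)). -/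
/-!
The Galois group `G = Gal(ℚ(ζ_p)/ℚ) ≅ (ℤ/pℤ)ˣ` is cyclic of order `p - 1` and acts on the torsion
group `T ≅ ℤ/16ℤ` through `Aut T ≅ (ℤ/16ℤ)ˣ`, a group of order `8`. As `4 ∤ p - 1`, the image
has order at most `2`, so every square in `G` acts trivially on `T`. The Gauss sum `s` of the
quadratic character satisfies `s² = -p`, and since `G` is cyclic and `s ∉ ℚ`, the automorphisms
fixing `s` are exactly the squares. Hence every torsion point is fixed by `Gal(ℚ(ζ_p)/ℚ(s))`,
and so is defined over `ℚ(s) = ℚ(√-p)`.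
-/

open WeierstrassCurve WeierstrassCurve.Affine

theorem IsPrimitiveRoot.exists_sq_eq_neg_of_mod_four_eq_three {R : Type*} [CommRing R]
    [IsDomain R] [CharZero R] {p : ℕ} [Fact p.Prime] {ζ : R} (hζ : IsPrimitiveRoot ζ p)
    (hp : p % 4 = 3) : ∃ s : R, s ^ 2 = -p := by
  have hchar : ringChar (ZMod p) ≠ 2 := by rw [ZMod.ringChar_zmod_n]; omega
  let χ : MulChar (ZMod p) R := (quadraticChar (ZMod p)).ringHomComp (Int.castRingHom R)
  have hχ₁ : χ ≠ 1 :=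
    (MulChar.ringHomComp_ne_one_iff Int.cast_injective).mpr (quadraticChar_ne_one hchar)
  have hχ_neg_one : χ (-1) = -1 := by
    change ((quadraticChar (ZMod p) (-1) : ℤ) : R) = -1
    rw [quadraticChar_neg_one hchar, ZMod.card p, ZMod.χ₄_nat_three_mod_four hp]
    push_cast; rfl
  refine ⟨gaussSum χ (AddChar.zmodChar p hζ.pow_eq_one), ?_⟩
  rw [gaussSum_sq hχ₁ ((quadraticChar_isQuadratic _).comp _)
    (AddChar.zmodChar_primitive_of_primitive_root p hζ), hχ_neg_one, ZMod.card, neg_one_mul]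

theorem IsCyclotomicExtension.natCard_gal_rat {n : ℕ} [NeZero n] (L : Type*) [Field L]
    [Algebra ℚ L] [IsCyclotomicExtension {n} ℚ L] : Nat.card Gal(L/ℚ) = n.totient := by
  rw [Nat.card_congr (autEquivPow L (Polynomial.cyclotomic.irreducible_rat (NeZero.pos n))).toEquiv,
    Nat.card_eq_fintype_card, ZMod.card_units_eq_totient]

theorem IsCyclotomicExtension.isCyclic_gal_rat_of_prime {p : ℕ} [Fact p.Prime] (L : Type*)
    [Field L] [Algebra ℚ L] [IsCyclotomicExtension {p} ℚ L] : IsCyclic Gal(L/ℚ) :=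
  isCyclic_of_surjective _ (autEquivPow L (Polynomial.cyclotomic.irreducible_rat
    (Fact.out : p.Prime).pos)).symm.surjective

theorem IsCyclic.exists_sq_eq_of_mem {G : Type*} [Group G] [IsCyclic G] {H : Subgroup G}
    (hsq : ∀ g, g ^ 2 ∈ H) (hH : H ≠ ⊤) {h : G} (hh : h ∈ H) : ∃ g, g ^ 2 = h := by
  obtain ⟨g, hg⟩ := IsCyclic.exists_generator (α := G)
  have hgH : g ∉ H := fun hgH => hH (eq_top_iff.mpr fun x _ => by
    obtain ⟨k, rfl⟩ := Subgroup.mem_zpowers_iff.mp (hg x); exact H.zpow_mem hgH k)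
  obtain ⟨k, rfl⟩ := Subgroup.mem_zpowers_iff.mp (hg h)
  obtain ⟨m, rfl | rfl⟩ := Int.even_or_odd' k
  · exact ⟨g ^ m, by rw [← zpow_natCast, ← zpow_mul, mul_comm]; rfl⟩
  · refine absurd ?_ hgH
    have : g ^ (1 : ℤ) = g ^ (2 * m + 1) * (g ^ (-m)) ^ 2 := by
      rw [← zpow_natCast, ← zpow_mul, ← zpow_add]; ring_nf
    rw [← zpow_one g, this]
    exact H.mul_mem hh (hsq _)

theorem MonoidHom.map_pow_eq_one_of_gcd_card_dvd {G H : Type*} [Group G] [Group H] (φ : G →* H)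
    {n : ℕ} (hn : (Nat.card G).gcd (Nat.card H) ∣ n) (g : G) : φ (g ^ n) = 1 := by
  rw [map_pow, ← orderOf_dvd_iff_pow_eq_one]
  exact (Nat.dvd_gcd ((orderOf_map_dvd φ g).trans (orderOf_dvd_natCard g))
    (orderOf_dvd_natCard _)).trans hn

theorem Nat.gcd_eight_dvd_two_of_not_four_dvd {m : ℕ} (hm : ¬ 4 ∣ m) : m.gcd 8 ∣ 2 := by
  rw [Nat.gcd_comm, Nat.gcd_rec]
  have : m % 8 < 8 := Nat.mod_lt _ (by norm_num)
  have : m % 8 ≠ 0 ∧ m % 8 ≠ 4 := by omega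
  interval_cases h : m % 8 <;> simp_all

instance AddCommGroup.torsion_characteristic (A : Type*) [AddCommGroup A] :
    (AddCommGroup.torsion A).Characteristic :=
  AddSubgroup.characteristic_iff_comap_eq.mpr fun e => e.comap_torsion

theorem AddAut.natCard_eq_totient_of_addEquiv_zmod {A : Type*} [AddGroup A] {n : ℕ} [NeZero n]
    (e : A ≃+ ZMod n) : Nat.card (AddAut A) = n.totient := by
  rw [← ZMod.card_units_eq_totient, ← Nat.card_eq_fintype_card]
  exact Nat.card_congr ((AddAut.congr e).toEquiv.trans (ZMod.AddAutEquivUnits n).toEquiv)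

theorem IntermediateField.notMem_bot_of_sq_eq_neg {F K : Type*} [Field F] [LinearOrder F]
    [IsStrictOrderedRing F] [Field K] [Algebra F K] {s : K} {a : F} (ha : 0 < a)
    (hs : s ^ 2 = -algebraMap F K a) : s ∉ (⊥ : IntermediateField F K) := by
  rintro ⟨r, rfl⟩
  have : r ^ 2 = -a := (algebraMap F K).injective (by simpa using hs)
  nlinarith [sq_nonneg r]

section Galois

variable {F K : Type*} [Field F] [Field K] [Algebra F K]

theorem AlgEquiv.sq_apply_eq_of_sq_mem_range {s : K} (hs : s ^ 2 ∈ Set.range (algebraMap F K))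
    (σ : K ≃ₐ[F] K) : (σ ^ 2) s = s := by
  obtain ⟨a, ha⟩ := hs
  have hσs : σ s ^ 2 = s ^ 2 := by rw [← map_pow, ← ha, AlgEquiv.commutes]
  rcases sq_eq_sq_iff_eq_or_eq_neg.mp hσs with h | h <;> simp [pow_two, h]

theorem IsGalois.exists_sq_eq_of_apply_eq [FiniteDimensional F K] [IsGalois F K]
    [IsCyclic Gal(K/F)] {s : K} (hsq : s ^ 2 ∈ Set.range (algebraMap F K))
    (hs : s ∉ (⊥ : IntermediateField F K)) {σ : Gal(K/F)} (hσ : σ s = s) :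
    ∃ τ : Gal(K/F), τ ^ 2 = σ := by
  refine IsCyclic.exists_sq_eq_of_mem (H := MulAction.stabilizer Gal(K/F) s)
    (fun τ => τ.sq_apply_eq_of_sq_mem_range hsq) (fun h => hs ?_) hσ
  exact (mem_bot_iff_fixed s).mpr fun τ => MulAction.mem_stabilizer_iff.mp (h ▸ Subgroup.mem_top τ)

end Galois

namespace WeierstrassCurve.Affine.Point

variable {F : Type*} [Field F] (W : WeierstrassCurve F) {K : Type*} [Field K] [Algebra F K]
  [DecidableEq K]

theorem map_algEquiv_symm_map (σ : K ≃ₐ[F] K) (P : (W.baseChange K).toAffine.Point) :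
    map (W' := W) σ.symm.toAlgHom (map (W' := W) σ.toAlgHom P) = P := by
  rcases P with _ | ⟨x, y, h⟩
  · rfl
  · rw [map_some, map_some]; congr <;> exact σ.symm_apply_apply _

variable (K) in
/-- `AddAut` is an additive group, hence the `Multiplicative`. -/
noncomputable def galoisAction :
    Gal(K/F) →* Multiplicative (AddAut (W.baseChange K).toAffine.Point) where
  toFun σ := .ofAdd
    { map (W' := W) σ.toAlgHom with
      invFun := map (W' := W) σ.symm.toAlgHom
      left_inv := map_algEquiv_symm_map W σ
      right_inv P := by simpa using map_algEquiv_symm_map W σ.symm P }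
  map_one' := by ext P; rcases P <;> rfl
  map_mul' σ τ := by ext P; rcases P <;> rfl

/-- Galois acts on the torsion through `AddAut (ZMod n) ≃ (ZMod n)ˣ`, a group of order `φ n`. -/
theorem map_pow_eq_self_of_mem_torsion {n k : ℕ} [NeZero n]
    (e : AddCommGroup.torsion (W.baseChange K).toAffine.Point ≃+ ZMod n)
    (hk : (Nat.card Gal(K/F)).gcd n.totient ∣ k) (σ : Gal(K/F))
    {P : (W.baseChange K).toAffine.Point} (hP : P ∈ AddCommGroup.torsion _) :
    map (W' := W) (σ ^ k).toAlgHom P = P := by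
  let ρ := (AddAut.characteristic (AddCommGroup.torsion _)).toMultiplicative.comp
    (galoisAction W K)
  have hρ : ρ (σ ^ k) = 1 := ρ.map_pow_eq_one_of_gcd_card_dvd (by
    rwa [Nat.card_congr Multiplicative.toAdd, AddAut.natCard_eq_totient_of_addEquiv_zmod e]) σ
  exact congrArg Subtype.val (DFunLike.congr_fun (congrArg Multiplicative.toAdd hρ) ⟨P, hP⟩)

theorem mem_range_map_val_of_forall_fixingSubgroup [FiniteDimensional F K] [IsGalois F K]
    {L : IntermediateField F K} [DecidableEq L] {P : (W.baseChange K).toAffine.Point}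
    (hP : ∀ σ ∈ L.fixingSubgroup, map (W' := W) σ.toAlgHom P = P) :
    P ∈ (map (W' := W) L.val).range := by
  rcases P with _ | ⟨x, y, h⟩
  · exact ⟨0, rfl⟩
  · have hfix : ∀ σ ∈ L.fixingSubgroup, σ x = x ∧ σ y = y := fun σ hσ => by
      simpa [map_some] using hP σ hσ
    have hx : x ∈ L := by
      rw [← IsGalois.fixedField_fixingSubgroup L]; exact fun σ => (hfix σ σ.2).1
    have hy : y ∈ L := by
      rw [← IsGalois.fixedField_fixingSubgroup L]; exact fun σ => (hfix σ σ.2).2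
    exact ⟨some _ _ ((baseChange_nonsingular (W := W) L.val.injective ⟨x, hx⟩ ⟨y, hy⟩).mp h), rfl⟩

end WeierstrassCurve.Affine.Point

open Classical in
theorem statement15_general (p : ℕ) (hp : p.Prime) (hmod : p % 4 = 3)
    (h4 : ¬ 4 ∣ (p - 1))
    (E : WeierstrassCurve ℚ)
    (htors : Nonempty
      ((AddCommGroup.torsion (E.baseChange (CyclotomicField p ℚ)).toAffine.Point) ≃+ ZMod 16)) :
    ∃ s : CyclotomicField p ℚ,
      s ^ 2 = -(p : CyclotomicField p ℚ) ∧
      ∀ P ∈ AddCommGroup.torsion (E.baseChange (CyclotomicField p ℚ)).toAffine.Point,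
        P ∈ (Affine.Point.map (W' := E.toAffine) (IntermediateField.adjoin ℚ {s}).val).range := by
  have : Fact p.Prime := ⟨hp⟩
  have : NeZero (p : ℚ) := ⟨Nat.cast_ne_zero.mpr hp.ne_zero⟩
  have : IsCyclotomicExtension {p} ℚ (CyclotomicField p ℚ) :=
    CyclotomicField.isCyclotomicExtension p ℚ
  have := IsCyclotomicExtension.isGalois {p} ℚ (CyclotomicField p ℚ)
  have := IsCyclotomicExtension.isCyclic_gal_rat_of_prime (p := p) (CyclotomicField p ℚ)
  obtain ⟨e⟩ := htors
  obtain ⟨s, hs⟩ := (IsCyclotomicExtension.zeta_spec p ℚ (CyclotomicField p ℚ)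
    ).exists_sq_eq_neg_of_mod_four_eq_three hmod
  have hs_irrational : s ∉ (⊥ : IntermediateField ℚ (CyclotomicField p ℚ)) :=
    IntermediateField.notMem_bot_of_sq_eq_neg (a := (p : ℚ)) (by exact_mod_cast hp.pos)
      (by simpa using hs)
  refine ⟨s, hs, fun P hP => Point.mem_range_map_val_of_forall_fixingSubgroup E fun σ hσ => ?_⟩
  obtain ⟨τ, rfl⟩ := IsGalois.exists_sq_eq_of_apply_eq ⟨-(p : ℚ), by simp [hs]⟩ hs_irrational
    ((IntermediateField.mem_fixingSubgroup_iff _ σ).mp hσ s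
      (IntermediateField.mem_adjoin_simple_self ℚ s))
  refine Point.map_pow_eq_self_of_mem_torsion E e ?_ τ hP
  rw [IsCyclotomicExtension.natCard_gal_rat (n := p), Nat.totient_prime hp,
    show Nat.totient 16 = 8 by decide]
  exact Nat.gcd_eight_dvd_two_of_not_four_dvd h4

open Classical in
/-- if `p ≡ 3 (mod 4)`, `p - 1` is not divisible by `3`, `4` or `5`, and
`E(ℚ(ζ_p))_tors ≅ ℤ/16ℤ`, then all torsion points of `E` over `ℚ(ζ_p)` are defined over
the quadratic subfield `ℚ(√(-p))`. -/
theorem statement15 (p : ℕ) (hp : p.Prime) (hp3 : 3 < p) (hmod : p % 4 = 3)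
    (h3 : ¬ 3 ∣ (p - 1)) (h4 : ¬ 4 ∣ (p - 1)) (h5 : ¬ 5 ∣ (p - 1))
    (E : WeierstrassCurve ℚ) [E.IsElliptic]
    (htors : Nonempty
      ((AddCommGroup.torsion (E.baseChange (CyclotomicField p ℚ)).toAffine.Point) ≃+ ZMod 16)) :
    ∃ s : CyclotomicField p ℚ,
      s ^ 2 = -(p : CyclotomicField p ℚ) ∧
      ∀ P ∈ AddCommGroup.torsion (E.baseChange (CyclotomicField p ℚ)).toAffine.Point,
        P ∈ (Affine.Point.map (W' := E.toAffine) (IntermediateField.adjoin ℚ {s}).val).range :=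
  statement15_general p hp hmod h4 E htors
end
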